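/- For every crisp frame F and every formula φ of biL¬_{□,◇}: F ⊨_{KG²} φ (i.e. v₁(φ,w)=1 and v₂(φ,w)=0 for every KG² model on F and every world w) if and only if v₁(φ,w)=1 for every KG² model on F and every world w. -/

import Mathlib

/- Truth values: the real unit interval [0,1] with its complete lattice structure
   (so `sInf ∅ = 1` and `sSup ∅ = 0`). -/
instance : Fact ((0:ℝ) ≤ 1) := ⟨zero_le_one⟩

abbrev TV : Type := unitInterval

/-- Gödel implication: `a →G b = 1` if `a ≤ b`, else `b`. -/
noncomputable def gimp (a b : TV) : TV := if a ≤ b then 1 else b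

/-- Gödel coimplication: `a ⧀G b = 0` if `a ≤ b`, else `a`. -/
noncomputable def gcoimp (a b : TV) : TV := if a ≤ b then 0 else a

/-- Formulas of `biL¬_{□,◇}` over the countable variable set `ℕ`. -/
inductive Formula : Type
  | var : ℕ → Formula
  | neg : Formula → Formula
  | and : Formula → Formula → Formula
  | or : Formula → Formula → Formula
  | imp : Formula → Formula → Formula
  | coimp : Formula → Formula → Formula
  | box : Formula → Formula
  | dia : Formula → Formula

/-- KG² valuation pair `(v₁, v₂)` on a crisp frame `(W, R)`:
`(kval R v φ w).1 = v₁(φ,w)` and `(kval R v φ w).2 = v₂(φ,w)`. -/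
noncomputable def kval {W : Type} (R : W → W → Prop) (v : ℕ → W → TV × TV) :
    Formula → W → TV × TV
  | .var p, w => v p w
  | .neg φ, w => ((kval R v φ w).2, (kval R v φ w).1)
  | .and φ ψ, w => ((kval R v φ w).1 ⊓ (kval R v ψ w).1, (kval R v φ w).2 ⊔ (kval R v ψ w).2)
  | .or φ ψ, w => ((kval R v φ w).1 ⊔ (kval R v ψ w).1, (kval R v φ w).2 ⊓ (kval R v ψ w).2)
  | .imp φ ψ, w =>
      (gimp (kval R v φ w).1 (kval R v ψ w).1, gcoimp (kval R v ψ w).2 (kval R v φ w).2)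
  | .coimp φ ψ, w =>
      (gcoimp (kval R v φ w).1 (kval R v ψ w).1, gimp (kval R v ψ w).2 (kval R v φ w).2)
  | .box φ, w =>
      (sInf ((fun w' => (kval R v φ w').1) '' {w' | R w w'}),
       sSup ((fun w' => (kval R v φ w').2) '' {w' | R w w'}))
  | .dia φ, w =>
      (sSup ((fun w' => (kval R v φ w').1) '' {w' | R w w'}),
       sInf ((fun w' => (kval R v φ w').2) '' {w' | R w w'}))

/-!
The map `(v₁, v₂) ↦ (1 - v₂, 1 - v₁)` on valuations commutes with every connective and modality:
`x ↦ 1 - x` is an order-reversing involution of `[0,1]`, so it exchanges `min`/`max`, `inf`/`sup`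
and Gödel implication/coimplication, exactly as `v₁` and `v₂` mirror each other in the semantics.
Hence `v₂(φ, w) = 1 - v₁'(φ, w)` in the dual model, and if `v₁(φ, ·) = 1` in every model on the
frame then `v₂(φ, ·) = 0` in every model on it.
-/

open unitInterval

lemma symm_sSup (S : Set TV) : σ (sSup S) = sInf (σ '' S) :=
  strictAnti_symm.antitone.map_sSup_of_continuousAt continuous_symm.continuousAt symm_zero

lemma symm_sInf (S : Set TV) : σ (sInf S) = sSup (σ '' S) :=
  strictAnti_symm.antitone.map_sInf_of_continuousAt continuous_symm.continuousAt symm_one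

lemma symm_inf (a b : TV) : σ (a ⊓ b) = σ a ⊔ σ b :=
  strictAnti_symm.antitone.map_min

lemma symm_sup (a b : TV) : σ (a ⊔ b) = σ a ⊓ σ b :=
  strictAnti_symm.antitone.map_max

lemma symm_gimp (a b : TV) : σ (gimp a b) = gcoimp (σ b) (σ a) := by
  simp only [gimp, gcoimp, symm_le_symm]
  split_ifs <;> simp

lemma symm_gcoimp (a b : TV) : σ (gcoimp a b) = gimp (σ b) (σ a) := by
  simp only [gimp, gcoimp, symm_le_symm]
  split_ifs <;> simp

def dualValuation {W : Type} (v : ℕ → W → TV × TV) : ℕ → W → TV × TV :=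
  fun p w => (σ (v p w).2, σ (v p w).1)

lemma kval_dualValuation {W : Type} (R : W → W → Prop) (v : ℕ → W → TV × TV) (φ : Formula)
    (w : W) :
    kval R (dualValuation v) φ w = (σ (kval R v φ w).2, σ (kval R v φ w).1) := by
  induction φ generalizing w with
  | var p => rfl
  | neg φ ih => simp only [kval, ih]
  | and φ ψ ih₁ ih₂ => simp only [kval, ih₁, ih₂, symm_inf, symm_sup]
  | or φ ψ ih₁ ih₂ => simp only [kval, ih₁, ih₂, symm_inf, symm_sup]
  | imp φ ψ ih₁ ih₂ => simp only [kval, ih₁, ih₂, symm_gimp, symm_gcoimp]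
  | coimp φ ψ ih₁ ih₂ => simp only [kval, ih₁, ih₂, symm_gimp, symm_gcoimp]
  | box φ ih => simp only [kval, ih, symm_sSup, symm_sInf, Set.image_image]
  | dia φ ih => simp only [kval, ih, symm_sSup, symm_sInf, Set.image_image]

lemma kval_snd_eq_zero_of_forall_fst_eq_one {W : Type} {R : W → W → Prop} {φ : Formula}
    (h : ∀ v w, (kval R v φ w).1 = 1) (v : ℕ → W → TV × TV) (w : W) : (kval R v φ w).2 = 0 := by
  have hdual := h (dualValuation v) w
  rw [kval_dualValuation] at hdual
  exact symm_eq_one.mp hdual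

theorem stmt1_general {W : Type} (R : W → W → Prop) (φ : Formula) :
    (∀ (v : ℕ → W → TV × TV) (w : W), (kval R v φ w).1 = 1 ∧ (kval R v φ w).2 = 0) ↔
    (∀ (v : ℕ → W → TV × TV) (w : W), (kval R v φ w).1 = 1) :=
  ⟨fun h v w => (h v w).1, fun h v w => ⟨h v w, kval_snd_eq_zero_of_forall_fst_eq_one h v w⟩⟩

/-- `F ⊨_{KG²} φ` iff `v₁(φ,w) = 1` in every KG² model on `F` at every world. -/
theorem stmt1 {W : Type} [Nonempty W] (R : W → W → Prop) (φ : Formula) :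
    (∀ (v : ℕ → W → TV × TV) (w : W), (kval R v φ w).1 = 1 ∧ (kval R v φ w).2 = 0) ↔
    (∀ (v : ℕ → W → TV × TV) (w : W), (kval R v φ w).1 = 1) :=
  stmt1_general R φ
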